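/- Let 0 ≤ n_P ≤ n, let ψ_1, …, ψ_n : [-π, π] → ℂ be twice continuously differentiable with ψ_l(-π) = ψ_l(π) and ψ_l'(-π) = ψ_l'(π) for all l, set c_l = ∫_{-π}^{π} |ψ_l|² dx with c_l ≠ 0 for l ≤ n_P, and let P be the projection associated with ψ_1, …, ψ_n and n_P. Write LΨ for the n-tuple with components -i·ψ_l'. Then Σ_{l=1}^{n} ⟨(P(LΨ))_l | -i·ψ_l'⟩ = Σ_{l=1}^{n} ⟨ψ_l | -ψ_l''⟩ - Σ_{l=1}^{n_P} (⟨ψ_l | -i·ψ_l'⟩)² / c_l, and the same value equals Σ_{l=1}^{n} ⟨ψ_l | -i·((P(LΨ))_l)'⟩. -/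

import Mathlib

open Real Complex MeasureTheory Finset


lemma conj_intervalIntegral (f : ℝ → ℂ) (a b : ℝ) :
    (starRingEnd ℂ) (∫ x in a..b, f x) = ∫ x in a..b, (starRingEnd ℂ) (f x) := by
  rw [intervalIntegral, intervalIntegral, map_sub, ← integral_conj, ← integral_conj]

lemma aux_facts (φ : ℝ → ℂ) (hφ : ContDiff ℝ 2 φ)
    (hp : φ (-π) = φ π) (hp' : deriv φ (-π) = deriv φ π) :
    (∫ x in (-π)..π, (starRingEnd ℂ) (φ x) * (-(deriv (deriv φ) x))
      = ∫ x in (-π)..π, (starRingEnd ℂ) (deriv φ x) * deriv φ x)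
  ∧ ((starRingEnd ℂ) (∫ x in (-π)..π, (starRingEnd ℂ) (φ x) * (-Complex.I * deriv φ x))
      = ∫ x in (-π)..π, (starRingEnd ℂ) (φ x) * (-Complex.I * deriv φ x))
  ∧ ((∫ x in (-π)..π, (starRingEnd ℂ) (φ x) * deriv φ x)
      = Complex.I * ∫ x in (-π)..π, (starRingEnd ℂ) (φ x) * (-Complex.I * deriv φ x)) := by
  have h11 : ContDiff ℝ (1+1) φ := by exact_mod_cast hφ
  have h1 : ContDiff ℝ 1 (deriv φ) := (contDiff_succ_iff_deriv.mp h11).2.2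
  have hφcont : Continuous φ := hφ.continuous
  have hd1cont : Continuous (deriv φ) := h1.continuous
  have hd2cont : Continuous (deriv (deriv φ)) := (contDiff_one_iff_deriv.mp h1).2
  have hdφ : ∀ x : ℝ, HasDerivAt φ (deriv φ x) x :=
    fun x => ((contDiff_succ_iff_deriv.mp h11).1 x).hasDerivAt
  have hdφ' : ∀ x : ℝ, HasDerivAt (deriv φ) (deriv (deriv φ) x) x :=
    fun x => ((contDiff_one_iff_deriv.mp h1).1 x).hasDerivAt
  have hdcφ : ∀ x : ℝ, HasDerivAt (fun t => (starRingEnd ℂ) (φ t)) ((starRingEnd ℂ) (deriv φ x)) x :=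
    fun x => (hdφ x).star
  have hcc : Continuous fun t => (starRingEnd ℂ) (φ t) := Complex.continuous_conj.comp hφcont
  have hcc' : Continuous fun t => (starRingEnd ℂ) (deriv φ t) := Complex.continuous_conj.comp hd1cont
  -- integration by parts with u = conj φ, v = deriv φ
  have hparts1 : (∫ x in (-π)..π, ((starRingEnd ℂ) (deriv φ x) * deriv φ x
      + (starRingEnd ℂ) (φ x) * deriv (deriv φ) x)) = 0 := by
    rw [intervalIntegral.integral_deriv_mul_eq_sub
        (u := fun t => (starRingEnd ℂ) (φ t)) (v := deriv φ)
        (fun x _ => hdcφ x) (fun x _ => hdφ' x)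
        (hcc'.intervalIntegrable _ _) (hd2cont.intervalIntegrable _ _)]
    rw [← hp, ← hp', sub_self]
  -- integration by parts with u = conj φ, v = φ
  have hparts2 : (∫ x in (-π)..π, ((starRingEnd ℂ) (deriv φ x) * φ x
      + (starRingEnd ℂ) (φ x) * deriv φ x)) = 0 := by
    rw [intervalIntegral.integral_deriv_mul_eq_sub
        (u := fun t => (starRingEnd ℂ) (φ t)) (v := φ)
        (fun x _ => hdcφ x) (fun x _ => hdφ x)
        (hcc'.intervalIntegrable _ _) (hd1cont.intervalIntegrable _ _)]
    rw [← hp, sub_self]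
  have i1 : IntervalIntegrable (fun x => (starRingEnd ℂ) (deriv φ x) * deriv φ x) volume (-π) π :=
    (hcc'.mul hd1cont).intervalIntegrable _ _
  have i2 : IntervalIntegrable (fun x => (starRingEnd ℂ) (φ x) * deriv (deriv φ) x) volume (-π) π :=
    (hcc.mul hd2cont).intervalIntegrable _ _
  have i3 : IntervalIntegrable (fun x => (starRingEnd ℂ) (deriv φ x) * φ x) volume (-π) π :=
    (hcc'.mul hφcont).intervalIntegrable _ _
  have i4 : IntervalIntegrable (fun x => (starRingEnd ℂ) (φ x) * deriv φ x) volume (-π) π :=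
    (hcc.mul hd1cont).intervalIntegrable _ _
  rw [intervalIntegral.integral_add i1 i2] at hparts1
  rw [intervalIntegral.integral_add i3 i4] at hparts2
  -- notation
  set S : ℂ := ∫ x in (-π)..π, (starRingEnd ℂ) (φ x) * deriv φ x with hS
  have hA : (∫ x in (-π)..π, (starRingEnd ℂ) (φ x) * (-Complex.I * deriv φ x)) = -Complex.I * S := by
    rw [hS, ← intervalIntegral.integral_const_mul]
    apply intervalIntegral.integral_congr
    intro x _; ring
  refine ⟨?_, ?_, ?_⟩
  · simp only [mul_neg]
    rw [intervalIntegral.integral_neg]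
    linear_combination -hparts1
  · -- conj A = A
    have hconjS : (starRingEnd ℂ) S = -S := by
      have h1 : (starRingEnd ℂ) S = ∫ x in (-π)..π, (starRingEnd ℂ) (deriv φ x) * φ x := by
        rw [hS, conj_intervalIntegral]
        apply intervalIntegral.integral_congr
        intro x _; simp [mul_comm]
      rw [h1]; linear_combination hparts2
    rw [hA, map_mul, hconjS]
    simp only [map_neg, Complex.conj_I]
    ring
  · rw [hA]; rw [show Complex.I * (-Complex.I * S) = S by
      rw [← mul_assoc]; simp [Complex.I_mul_I]]

lemma aux_smooth (φ : ℝ → ℂ) (hφ : ContDiff ℝ 2 φ) :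
    Continuous φ ∧ Continuous (deriv φ) ∧ Continuous (deriv (deriv φ)) ∧
    (∀ x, HasDerivAt φ (deriv φ x) x) ∧ (∀ x, HasDerivAt (deriv φ) (deriv (deriv φ) x) x) := by
  have h11 : ContDiff ℝ (1+1) φ := by exact_mod_cast hφ
  have h1 : ContDiff ℝ 1 (deriv φ) := (contDiff_succ_iff_deriv.mp h11).2.2
  exact ⟨hφ.continuous, h1.continuous, (contDiff_one_iff_deriv.mp h1).2,
    fun x => ((contDiff_succ_iff_deriv.mp h11).1 x).hasDerivAt,
    fun x => ((contDiff_one_iff_deriv.mp h1).1 x).hasDerivAt⟩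

/-- The projection onto the tangent space of the first `nP` normalization constraints. -/
noncomputable def projNorm (n nP : ℕ) (ψ : Fin n → ℝ → ℂ) (c : Fin n → ℂ)
    (ξ : Fin n → ℝ → ℂ) : Fin n → ℝ → ℂ :=
  fun l x =>
    if (l : ℕ) < nP then
      ξ l x - ψ l x * ((∫ t in (-π)..π, (starRingEnd ℂ) (ψ l t) * ξ l t) / c l)
    else ξ l x

/-- `Σ_l ⟨(P(LΨ))_l | Lψ_l⟩ = Σ_l ⟨ψ_l | L²ψ_l⟩ - Σ_{l ≤ nP} ⟨ψ_l|Lψ_l⟩²/c_l`, and the same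
value equals `Σ_l ⟨ψ_l | L (P(LΨ))_l⟩`, for `L = -i d/dx` on periodic functions. -/
theorem proj_momentum_diagonal
    (n nP : ℕ) (hnP : nP ≤ n)
    (ψ : Fin n → ℝ → ℂ)
    (hψ : ∀ l, ContDiff ℝ 2 (ψ l))
    (hper : ∀ l, ψ l (-π) = ψ l π)
    (hper' : ∀ l, deriv (ψ l) (-π) = deriv (ψ l) π)
    (c : Fin n → ℂ)
    (hc : ∀ l, c l = ∫ x in (-π)..π, ((‖ψ l x‖ : ℂ))^2)
    (hc0 : ∀ l : Fin n, (l : ℕ) < nP → c l ≠ 0)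
    (LΨ : Fin n → ℝ → ℂ)
    (hL : ∀ l x, LΨ l x = -Complex.I * deriv (ψ l) x) :
    (∑ l : Fin n, ∫ x in (-π)..π,
        (starRingEnd ℂ) (projNorm n nP ψ c LΨ l x) * (-Complex.I * deriv (ψ l) x)) =
      (∑ l : Fin n, ∫ x in (-π)..π,
          (starRingEnd ℂ) (ψ l x) * (-(deriv (deriv (ψ l)) x))) -
        (∑ l ∈ Finset.univ.filter (fun l : Fin n => (l : ℕ) < nP),
          (∫ x in (-π)..π, (starRingEnd ℂ) (ψ l x) * (-Complex.I * deriv (ψ l) x))^2 / c l) ∧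
    (∑ l : Fin n, ∫ x in (-π)..π,
        (starRingEnd ℂ) (projNorm n nP ψ c LΨ l x) * (-Complex.I * deriv (ψ l) x)) =
      (∑ l : Fin n, ∫ x in (-π)..π,
        (starRingEnd ℂ) (ψ l x) * (-Complex.I * deriv (projNorm n nP ψ c LΨ l) x)) := by
  have key := fun l => aux_facts (ψ l) (hψ l) (hper l) (hper' l)
  have sm := fun l => aux_smooth (ψ l) (hψ l)
  -- continuity of conjugates
  have hcc : ∀ l, Continuous fun t => (starRingEnd ℂ) (ψ l t) :=
    fun l => Complex.continuous_conj.comp (sm l).1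
  have hcc' : ∀ l, Continuous fun t => (starRingEnd ℂ) (deriv (ψ l) t) :=
    fun l => Complex.continuous_conj.comp (sm l).2.1
  -- reality of c
  have hcconj : ∀ l, (starRingEnd ℂ) (c l) = c l := by
    intro l
    rw [hc l, conj_intervalIntegral]
    apply intervalIntegral.integral_congr
    intro x _
    simp [map_pow, Complex.conj_ofReal]
  -- the inner integral of projNorm
  have hinner : ∀ l, (∫ t in (-π)..π, (starRingEnd ℂ) (ψ l t) * LΨ l t)
      = ∫ t in (-π)..π, (starRingEnd ℂ) (ψ l t) * (-Complex.I * deriv (ψ l) t) :=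
    fun l => intervalIntegral.integral_congr fun t _ => by rw [hL]
  -- description of projNorm in the two cases
  have hPpos : ∀ l : Fin n, (l : ℕ) < nP → projNorm n nP ψ c LΨ l
      = fun x => -Complex.I * deriv (ψ l) x
          - ψ l x * ((∫ t in (-π)..π, (starRingEnd ℂ) (ψ l t) * (-Complex.I * deriv (ψ l) t)) / c l) := by
    intro l hl; funext x
    simp only [projNorm, if_pos hl, hL, hinner l]
  have hPneg : ∀ l : Fin n, ¬ (l : ℕ) < nP → projNorm n nP ψ c LΨ l
      = fun x => -Complex.I * deriv (ψ l) x := by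
    intro l hl; funext x
    simp only [projNorm, if_neg hl, hL]
  -- first key pointwise-sum identity
  have E1 : ∀ l : Fin n, (∫ x in (-π)..π,
        (starRingEnd ℂ) (projNorm n nP ψ c LΨ l x) * (-Complex.I * deriv (ψ l) x))
      = (∫ x in (-π)..π, (starRingEnd ℂ) (deriv (ψ l) x) * deriv (ψ l) x)
        - (if (l : ℕ) < nP then
            (∫ x in (-π)..π, (starRingEnd ℂ) (ψ l x) * (-Complex.I * deriv (ψ l) x))^2 / c l
          else 0) := by
    intro l
    by_cases hl : (l : ℕ) < nP
    · rw [hPpos l hl, if_pos hl]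
      set A : ℂ := ∫ x in (-π)..π, (starRingEnd ℂ) (ψ l x) * (-Complex.I * deriv (ψ l) x) with hA
      have hsplit : (∫ x in (-π)..π,
          (starRingEnd ℂ) (-Complex.I * deriv (ψ l) x - ψ l x * (A / c l))
            * (-Complex.I * deriv (ψ l) x))
          = ∫ x in (-π)..π, ((starRingEnd ℂ) (deriv (ψ l) x) * deriv (ψ l) x
            - (starRingEnd ℂ) (A / c l)
              * ((starRingEnd ℂ) (ψ l x) * (-Complex.I * deriv (ψ l) x))) := by
        apply intervalIntegral.integral_congr
        intro x _
        simp only [map_sub, map_mul, map_neg, Complex.conj_I]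
        linear_combination (-(starRingEnd ℂ) (deriv (ψ l) x) * deriv (ψ l) x) * Complex.I_sq
      rw [hsplit, intervalIntegral.integral_sub
        (f := fun x => (starRingEnd ℂ) (deriv (ψ l) x) * deriv (ψ l) x)
        (g := fun x => (starRingEnd ℂ) (A / c l) * ((starRingEnd ℂ) (ψ l x) * (-Complex.I * deriv (ψ l) x)))
        (((hcc' l).mul (sm l).2.1).intervalIntegrable _ _)
        ((continuous_const.mul ((hcc l).mul
          (continuous_const.mul (sm l).2.1))).intervalIntegrable _ _),
        intervalIntegral.integral_const_mul]
      congr 1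
      rw [← hA, map_div₀, (key l).2.1, hcconj l, div_mul_eq_mul_div, sq]
    · rw [hPneg l hl, if_neg hl, sub_zero]
      apply intervalIntegral.integral_congr
      intro x _
      simp only [map_mul, map_neg, Complex.conj_I]
      linear_combination (-(starRingEnd ℂ) (deriv (ψ l) x) * deriv (ψ l) x) * Complex.I_sq
  -- second key pointwise-sum identity
  have E3 : ∀ l : Fin n, (∫ x in (-π)..π,
        (starRingEnd ℂ) (ψ l x) * (-Complex.I * deriv (projNorm n nP ψ c LΨ l) x))
      = (∫ x in (-π)..π, (starRingEnd ℂ) (deriv (ψ l) x) * deriv (ψ l) x)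
        - (if (l : ℕ) < nP then
            (∫ x in (-π)..π, (starRingEnd ℂ) (ψ l x) * (-Complex.I * deriv (ψ l) x))^2 / c l
          else 0) := by
    intro l
    by_cases hl : (l : ℕ) < nP
    · rw [hPpos l hl, if_pos hl]
      set A : ℂ := ∫ x in (-π)..π, (starRingEnd ℂ) (ψ l x) * (-Complex.I * deriv (ψ l) x) with hA
      set k : ℂ := A / c l with hk
      have hderiv : ∀ x : ℝ, deriv (fun x => -Complex.I * deriv (ψ l) x - ψ l x * k) x
          = -Complex.I * deriv (deriv (ψ l)) x - deriv (ψ l) x * k :=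
        fun x => ((((sm l).2.2.2.2 x).const_mul (-Complex.I)).sub
          (((sm l).2.2.2.1 x).mul_const k)).deriv
      have hsplit : (∫ x in (-π)..π, (starRingEnd ℂ) (ψ l x)
            * (-Complex.I * deriv (fun x => -Complex.I * deriv (ψ l) x - ψ l x * k) x))
          = ∫ x in (-π)..π, ((starRingEnd ℂ) (ψ l x) * (-(deriv (deriv (ψ l)) x))
              + (Complex.I * k) * ((starRingEnd ℂ) (ψ l x) * deriv (ψ l) x)) := by
        apply intervalIntegral.integral_congr
        intro x _
        beta_reduce
        rw [hderiv x]
        linear_combination ((starRingEnd ℂ) (ψ l x) * deriv (deriv (ψ l)) x) * Complex.I_sq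
      rw [hsplit, intervalIntegral.integral_add
        (f := fun x => (starRingEnd ℂ) (ψ l x) * (-(deriv (deriv (ψ l)) x)))
        (g := fun x => (Complex.I * k) * ((starRingEnd ℂ) (ψ l x) * deriv (ψ l) x))
        (((hcc l).mul ((sm l).2.2.1.neg)).intervalIntegrable _ _)
        ((continuous_const.mul ((hcc l).mul (sm l).2.1)).intervalIntegrable _ _),
        intervalIntegral.integral_const_mul, (key l).1, (key l).2.2, ← hA]
      have hcl := hc0 l hl
      have h2 : Complex.I * (A / c l) * (Complex.I * A) = -(A ^ 2 / c l) := by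
        field_simp
        linear_combination A ^ 2 * Complex.I_sq
      rw [hk]
      linear_combination h2
    · rw [hPneg l hl, if_neg hl, sub_zero]
      have hderiv : ∀ x : ℝ, deriv (fun x => -Complex.I * deriv (ψ l) x) x
          = -Complex.I * deriv (deriv (ψ l)) x :=
        fun x => (((sm l).2.2.2.2 x).const_mul (-Complex.I)).deriv
      have hsplit : (∫ x in (-π)..π, (starRingEnd ℂ) (ψ l x)
            * (-Complex.I * deriv (fun x => -Complex.I * deriv (ψ l) x) x))
          = ∫ x in (-π)..π, (starRingEnd ℂ) (ψ l x) * (-(deriv (deriv (ψ l)) x)) := by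
        apply intervalIntegral.integral_congr
        intro x _
        beta_reduce
        rw [hderiv x]
        linear_combination ((starRingEnd ℂ) (ψ l x) * deriv (deriv (ψ l)) x) * Complex.I_sq
      rw [hsplit, (key l).1]
  constructor
  · rw [Finset.sum_congr rfl (fun l _ => E1 l), Finset.sum_sub_distrib]
    congr 1
    · exact Finset.sum_congr rfl fun l _ => ((key l).1).symm
    · rw [Finset.sum_filter]
  · rw [Finset.sum_congr rfl (fun l _ => E1 l), Finset.sum_congr rfl (fun l _ => E3 l)]
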